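/- arXiv:1310.1853 — 2 statements merged into one kernel-verified Lean document; each statement's English description precedes it below -/
import Mathlib

section
/- Let N > 0, μ_P, μ_D ≥ 0, and ς_P > 0 with ς_P ≠ 1; set ν_P = 1 - μ_D - μ_P. Define sequences x_{0,k}(t) for k ≥ 0 by x_{0,0}(0) = N, x_{0,k}(0) = 0 for k ≥ 1, and the recursion x_{0,k}(t) = ν_P ς_P^k x_{0,k}(t-1) + μ_P ς_P^{k-1} x_{0,k-1}(t-1) (with x_{0,-1} ≡ 0). Then for all t ≥ k, x_{0,k}(t) = N μ_P^k ν_P^{t-k} ς_P^{k(k-1)/2} ∏_{n=0}^{k-1} (1 - ς_P^{t-n})/(1 - ς_P^{n+1}). -/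
/-!
The product `∏_{n<k} (1 - ς^(t-n)) / (1 - ς^(n+1))` is the Gaussian binomial coefficient
`[t, k]_ς`, and it satisfies the `ς`-Pascal rule `[t+1, k+1] = ς^(k+1) [t, k+1] + [t, k]`.
With `k(k-1)/2 + k = (k+1)k/2`, this is exactly the recursion for `x_{0,k}`, so the closed
form is its unique solution. Reading `ς^(t-n)` with truncated subtraction makes `[t, k]`
vanish for `k > t`, so the closed form holds for all `k` and `t`, not only for `k ≤ t`.
-/

open Finset

section GaussianBinomial

variable {K : Type*} [Field K]

def gaussianBinomial (q : K) (t k : ℕ) : K :=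
  ∏ n ∈ range k, (1 - q ^ (t - n)) / (1 - q ^ (n + 1))

@[simp]
lemma gaussianBinomial_zero_right (q : K) (t : ℕ) : gaussianBinomial q t 0 = 1 := by
  simp [gaussianBinomial]

lemma gaussianBinomial_eq_zero_of_lt (q : K) {t k : ℕ} (h : t < k) :
    gaussianBinomial q t k = 0 :=
  prod_eq_zero (mem_range.2 h) (by simp)

lemma prod_one_sub_pow_succ_sub (q : K) (t k : ℕ) :
    ∏ n ∈ range (k + 1), (1 - q ^ (t + 1 - n)) =
      (1 - q ^ (t + 1)) * ∏ n ∈ range k, (1 - q ^ (t - n)) := by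
  rw [prod_range_succ', mul_comm]
  simp only [Nat.sub_zero, Nat.add_sub_add_right]

lemma gaussianBinomial_succ_succ {q : K} (hq : ∀ n : ℕ, q ^ (n + 1) ≠ 1) (t k : ℕ) :
    gaussianBinomial q (t + 1) (k + 1) =
      q ^ (k + 1) * gaussianBinomial q t (k + 1) + gaussianBinomial q t k := by
  rcases lt_or_ge t k with htk | hkt
  · rw [gaussianBinomial_eq_zero_of_lt q htk,
      gaussianBinomial_eq_zero_of_lt q (htk.trans k.lt_succ_self),
      gaussianBinomial_eq_zero_of_lt q (Nat.succ_lt_succ htk), mul_zero, add_zero]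
  have hden : ∀ n : ℕ, 1 - q ^ (n + 1) ≠ 0 := fun n => sub_ne_zero.2 (hq n).symm
  have hprod : ∏ n ∈ range k, (1 - q ^ (n + 1)) ≠ 0 := prod_ne_zero_iff.2 fun n _ => hden n
  have hpow : q ^ (t + 1) = q ^ (k + 1) * q ^ (t - k) := by
    rw [← pow_add]; congr 1; omega
  unfold gaussianBinomial
  rw [prod_div_distrib, prod_div_distrib, prod_div_distrib, prod_one_sub_pow_succ_sub,
    prod_range_succ _ k, prod_range_succ _ k, hpow]
  have hdenk := hden k
  field_simp
  ring

end GaussianBinomial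

section NoDriverCells

variable {K : Type*} [Field K]

/-- `x_{0,k}(t)` for initial population `N`, mutation rate `μ`, per-generation factor `ν`
and secondary-driver fitness factor `σ`. -/
def noDriverClosedForm (N μ ν σ : K) (k t : ℕ) : K :=
  N * μ ^ k * ν ^ (t - k) * σ ^ (k * (k - 1) / 2) * gaussianBinomial σ t k

lemma mul_pow_sub_succ_mul_gaussianBinomial (ν σ : K) (t k : ℕ) :
    ν * ν ^ (t - (k + 1)) * gaussianBinomial σ t (k + 1) =
      ν ^ (t - k) * gaussianBinomial σ t (k + 1) := by
  rcases lt_or_ge k t with hkt | htk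
  · rw [← pow_succ', show t - (k + 1) + 1 = t - k by omega]
  · simp [gaussianBinomial_eq_zero_of_lt σ (Nat.lt_succ_of_le htk)]

lemma noDriverClosedForm_zero_succ (N μ ν σ : K) (t : ℕ) :
    noDriverClosedForm N μ ν σ 0 (t + 1) = ν * noDriverClosedForm N μ ν σ 0 t := by
  simp only [noDriverClosedForm, gaussianBinomial_zero_right, Nat.sub_zero, pow_succ]
  ring

lemma noDriverClosedForm_succ_succ {σ : K} (hσ : ∀ n : ℕ, σ ^ (n + 1) ≠ 1)
    (N μ ν : K) (k t : ℕ) :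
    noDriverClosedForm N μ ν σ (k + 1) (t + 1) =
      ν * σ ^ (k + 1) * noDriverClosedForm N μ ν σ (k + 1) t
        + μ * σ ^ k * noDriverClosedForm N μ ν σ k t := by
  have hν := mul_pow_sub_succ_mul_gaussianBinomial ν σ t k
  unfold noDriverClosedForm
  rw [Nat.triangle_succ, Nat.add_sub_add_right, gaussianBinomial_succ_succ hσ, pow_add]
  linear_combination -N * μ ^ (k + 1) * σ ^ (k * (k - 1) / 2) * σ ^ k * σ ^ (k + 1) * hν

theorem eq_noDriverClosedForm {N μ ν σ : K} (hσ : ∀ n : ℕ, σ ^ (n + 1) ≠ 1)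
    {x : ℕ → ℕ → K} (hinit0 : x 0 0 = N) (hinit : ∀ k, 1 ≤ k → x k 0 = 0)
    (hrec : ∀ k t, x k (t + 1) =
      ν * σ ^ k * x k t + (if k = 0 then 0 else μ * σ ^ (k - 1) * x (k - 1) t))
    (k t : ℕ) : x k t = noDriverClosedForm N μ ν σ k t := by
  induction t generalizing k with
  | zero =>
    rcases k with _ | k
    · simp [noDriverClosedForm, hinit0]
    · simp [noDriverClosedForm, hinit (k + 1) k.succ_pos,
        gaussianBinomial_eq_zero_of_lt σ k.succ_pos]
  | succ t ih =>
    rcases k with _ | k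
    · simp [hrec, ih, noDriverClosedForm_zero_succ]
    · simp [hrec, ih, noDriverClosedForm_succ_succ hσ]

end NoDriverCells

theorem cells_without_driver_closed_form_general
    (N μP μD ςP : ℝ)
    (hςP : 0 < ςP) (hςP1 : ςP ≠ 1)
    (x : ℕ → ℕ → ℝ)
    (hinit0 : x 0 0 = N)
    (hinit : ∀ k, 1 ≤ k → x k 0 = 0)
    (hrec : ∀ k t, 1 ≤ t →
      x k t = (1 - μD - μP) * ςP ^ k * x k (t - 1)
        + (if k = 0 then 0 else μP * ςP ^ (k - 1) * x (k - 1) (t - 1))) :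
    ∀ k t, k ≤ t →
      x k t = N * μP ^ k * (1 - μD - μP) ^ (t - k) * ςP ^ (k * (k - 1) / 2)
        * ∏ n ∈ Finset.range k, (1 - ςP ^ (t - n)) / (1 - ςP ^ (n + 1)) := by
  have hpow : ∀ n : ℕ, ςP ^ (n + 1) ≠ 1 := fun n h =>
    hςP1 ((pow_eq_one_iff_of_nonneg hςP.le n.succ_ne_zero).1 h)
  intro k t _
  exact eq_noDriverClosedForm hpow hinit0 hinit (fun k t => hrec k (t + 1) t.succ_pos) k t

/-- closed form for the expected number of cells without the primary
driver mutation and with `k` secondary driver mutations, when the secondary driver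
fitness advantage `ς_P ≠ 1`. Here `x k t` is `x_{0,k}(t)` and `ν_P = 1 - μ_D - μ_P`. -/
theorem cells_without_driver_closed_form
    (N μP μD ςP : ℝ) (hN : 0 < N) (hμP : 0 ≤ μP) (hμD : 0 ≤ μD)
    (hςP : 0 < ςP) (hςP1 : ςP ≠ 1)
    (x : ℕ → ℕ → ℝ)
    (hinit0 : x 0 0 = N)
    (hinit : ∀ k, 1 ≤ k → x k 0 = 0)
    (hrec : ∀ k t, 1 ≤ t →
      x k t = (1 - μD - μP) * ςP ^ k * x k (t - 1)
        + (if k = 0 then 0 else μP * ςP ^ (k - 1) * x (k - 1) (t - 1))) :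
    ∀ k t, k ≤ t →
      x k t = N * μP ^ k * (1 - μD - μP) ^ (t - k) * ςP ^ (k * (k - 1) / 2)
        * ∏ n ∈ Finset.range k, (1 - ςP ^ (t - n)) / (1 - ςP ^ (n + 1)) :=
  cells_without_driver_closed_form_general N μP μD ςP hςP hςP1 x hinit0 hinit hrec
end

section
/- Define Ψ_{p,k}(t) = Σ_{r=0}^{p} [(-ς_P^{t-p+1})^r ς_P^{r(r-1)/2} qbinom(p, r, ς_P)] / ∏_{j=p}^{k} (ν_P ς_P^r − ν_D ς_D ς_DP^j). Then for all t, p ≤ k: ν_D ς_D ς_DP^k Ψ_{p,k}(t-1) + Ψ_{p,k-1}(t-1) = ν_P Ψ_{p,k}(t), provided all denominators ν_P ς_P^r − ν_D ς_D ς_DP^j are nonzero. -/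
/-- The Gaussian (q-)binomial coefficient. -/
noncomputable def qbinom (t k : ℕ) (q : ℝ) : ℝ :=
  ∏ n ∈ Finset.range k, (1 - q ^ (t - n)) / (1 - q ^ (n + 1))

/-- `Ψ_{p,k}(t) = Σ_{r=0}^{p} [(-ς_P^{t-p+1})^r ς_P^{r(r-1)/2} qbinom(p,r,ς_P)]
                    / ∏_{j=p}^{k} (ν_P ς_P^r - ν_D ς_D ς_DP^j)`. -/
noncomputable def Psi (νP νD ςP ςD ςDP : ℝ) (p : ℕ) (k t : ℤ) : ℝ :=
  ∑ r ∈ Finset.range (p + 1),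
    ((-(ςP ^ (t - p + 1))) ^ r * ςP ^ (r * (r - 1) / 2) * qbinom p r ςP) /
      ∏ j ∈ Finset.Icc (p : ℤ) k, (νP * ςP ^ r - νD * ςD * ςDP ^ j)

/-! Term by term in `r`: shifting `t` by one multiplies the numerator by `ς_P^r`, and peeling the
factor `c = ν_P ς_P^r - ν_D ς_D ς_DP^k` off the denominator turns the identity into
`ν_D ς_D ς_DP^k + c = ν_P ς_P^r`. -/

open Finset

lemma neg_zpow_add_one_pow {K : Type*} [Field K] {q : K} (hq : q ≠ 0) (s : ℤ) (r : ℕ) :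
    (-(q ^ (s + 1))) ^ r = (-(q ^ s)) ^ r * q ^ r := by
  rw [← mul_pow, neg_mul, zpow_add_one₀ hq]

lemma mul_div_mul_add_div {K : Type*} [Field K] {a b c D : K} (hc : c ≠ 0) (hD : D ≠ 0) :
    b * (a / (D * c)) + a / D = (b + c) * (a / (D * c)) := by
  field_simp

theorem psi_recursion_general (νP νD ςP ςD ςDP : ℝ)
    (hςP : 0 < ςP) (p : ℕ) (k t : ℤ) (hpk : (p : ℤ) ≤ k)
    (hden : ∀ r ≤ p, ∀ j ∈ Finset.Icc (p : ℤ) k, νP * ςP ^ r ≠ νD * ςD * ςDP ^ j) :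
    νD * ςD * ςDP ^ k * Psi νP νD ςP ςD ςDP p k (t - 1)
      + Psi νP νD ςP ςD ςDP p (k - 1) (t - 1)
      = νP * Psi νP νD ςP ςD ςDP p k t := by
  unfold Psi
  rw [mul_sum, mul_sum, ← sum_add_distrib]
  refine sum_congr rfl fun r hr => ?_
  have hfactor : ∀ j ∈ Icc (p : ℤ) k, νP * ςP ^ r - νD * ςD * ςDP ^ j ≠ 0 := fun j hj =>
    sub_ne_zero.mpr (hden r (Nat.lt_succ_iff.mp (mem_range.mp hr)) j hj)
  have hc := hfactor k (right_mem_Icc.mpr hpk)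
  have hD : ∏ j ∈ Icc (p : ℤ) (k - 1), (νP * ςP ^ r - νD * ςD * ςDP ^ j) ≠ 0 :=
    prod_ne_zero_iff.mpr fun j hj => hfactor j (Icc_subset_Icc_right (by omega) hj)
  rw [← prod_Ico_mul_eq_prod_Icc hpk, ← Icc_sub_one_right_eq_Ico, mul_div_mul_add_div hc hD,
    show t - p + 1 = (t - 1 - p + 1) + 1 by ring, neg_zpow_add_one_pow hςP.ne' (t - 1 - p + 1)]
  ring

/-- `ν_D ς_D ς_DP^k Ψ_{p,k}(t-1) + Ψ_{p,k-1}(t-1) = ν_P Ψ_{p,k}(t)`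
for all `t` and `p ≤ k`, provided all denominators are nonzero. -/
theorem psi_recursion (νP νD ςP ςD ςDP : ℝ)
    (hνP : 0 < νP) (hνD : 0 < νD) (hςP : 0 < ςP) (hςD : 0 < ςD) (hςDP : 0 < ςDP)
    (hςP1 : ςP ≠ 1) (p : ℕ) (k t : ℤ) (hpk : (p : ℤ) ≤ k)
    (hden : ∀ r ≤ p, ∀ j ∈ Finset.Icc (p : ℤ) k, νP * ςP ^ r ≠ νD * ςD * ςDP ^ j) :
    νD * ςD * ςDP ^ k * Psi νP νD ςP ςD ςDP p k (t - 1)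
      + Psi νP νD ςP ςD ςDP p (k - 1) (t - 1)
      = νP * Psi νP νD ςP ςD ςDP p k t :=
  psi_recursion_general νP νD ςP ςD ςDP hςP p k t hpk hden
end
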